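/- arXiv:2103.07468 — 2 statements merged into one kernel-verified Lean document; each statement's English description precedes it below -/
import Mathlib

section
/- Let a, b, c, d be positive reals and α a real with a/b < α < c/d. Then there exist sequences of positive integers (p_k) and (q_k) such that the sequence r_k := (p_k·a + q_k·c)/(p_k·b + q_k·d) is strictly increasing and converges to α. -/
theorem stmt_7 (a b c d α : ℝ) (ha : 0 < a) (hb : 0 < b) (hc : 0 < c) (hd : 0 < d)
    (h1 : a / b < α) (h2 : α < c / d) :
    ∃ p q : ℕ → ℕ, (∀ k, 0 < p k) ∧ (∀ k, 0 < q k) ∧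
      StrictMono (fun k => ((p k : ℝ) * a + (q k : ℝ) * c) / ((p k : ℝ) * b + (q k : ℝ) * d)) ∧
      Filter.Tendsto
        (fun k => ((p k : ℝ) * a + (q k : ℝ) * c) / ((p k : ℝ) * b + (q k : ℝ) * d))
        Filter.atTop (nhds α) := by
  have hbc : a * d < c * b := (div_lt_div_iff₀ hb hd).mp (h1.trans h2)
  have hnum : 0 < α * b - a := by
    have := (div_lt_iff₀ hb).mp h1; linarith
  have hden : 0 < c - α * d := by
    have := (lt_div_iff₀ hd).mp h2; linarith
  set t : ℝ := (α * b - a) / (c - α * d) with ht_def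
  have ht : 0 < t := div_pos hnum hden
  obtain ⟨u, hu_mono, hu_lt, hu_tend⟩ := exists_seq_strictMono_tendsto t
  obtain ⟨N, hN⟩ := Filter.eventually_atTop.mp (hu_tend.eventually (eventually_gt_nhds ht))
  set v : ℕ → ℝ := fun k => u (k + N) with hv_def
  have hv_mono : StrictMono v := fun i j hij => hu_mono (by omega)
  have hv_pos : ∀ k, 0 < v k := fun k => hN _ (by omega)
  have hv_lt : ∀ k, v k < t := fun k => hu_lt _
  have hv_tend : Filter.Tendsto v Filter.atTop (nhds t) :=
    hu_tend.comp (Filter.tendsto_add_atTop_nat N)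
  choose w hw1 hw2 using fun k => exists_rat_btwn (hv_mono (Nat.lt_succ_self k))
  set W : ℕ → ℝ := fun k => ((w k : ℚ) : ℝ) with hW_def
  have hW1 : ∀ k, v k < W k := hw1
  have hW2 : ∀ k, W k < v (k + 1) := hw2
  have hWpos : ∀ k, 0 < W k := fun k => (hv_pos k).trans (hW1 k)
  have hWmono : StrictMono W :=
    strictMono_nat_of_lt_succ fun k => (hW2 k).trans (hW1 (k + 1))
  have hWtend : Filter.Tendsto W Filter.atTop (nhds t) := by
    refine tendsto_of_tendsto_of_tendsto_of_le_of_le hv_tend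
      (hv_tend.comp (Filter.tendsto_add_atTop_nat 1)) (fun k => (hW1 k).le)
      (fun k => (hW2 k).le)
  refine ⟨fun k => (w k).den, fun k => (w k).num.toNat, fun k => (w k).pos, ?_, ?_⟩
  · intro k
    show 0 < (w k).num.toNat
    have hwk : 0 < w k := by
      have h := hWpos k; simp only [hW_def] at h; exact_mod_cast h
    have := Rat.num_pos.mpr hwk
    omega
  have hq_cast : ∀ k, (((w k).num.toNat : ℝ)) = W k * ((w k).den : ℝ) := by
    intro k
    have hwk : 0 < w k := by
      have h := hWpos k; simp only [hW_def] at h; exact_mod_cast h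
    have hnn : (0:ℤ) ≤ (w k).num := (Rat.num_pos.mpr hwk).le
    have h1' : (((w k).num.toNat : ℤ) : ℝ) = ((w k).num : ℝ) := by
      exact_mod_cast congrArg (Int.cast : ℤ → ℝ) (Int.toNat_of_nonneg hnn)
    have hden' : ((w k).den : ℝ) ≠ 0 := Nat.cast_ne_zero.mpr (w k).den_nz
    have hcast : W k = ((w k).num : ℝ) / ((w k).den : ℝ) := by
      simp [hW_def, Rat.cast_def]
    rw [hcast, div_mul_cancel₀ _ hden']
    exact_mod_cast h1'
  have hexpr : ∀ k, (((w k).den : ℝ) * a + ((w k).num.toNat : ℝ) * c) /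
      (((w k).den : ℝ) * b + ((w k).num.toNat : ℝ) * d)
      = (a + W k * c) / (b + W k * d) := by
    intro k
    have hden' : ((w k).den : ℝ) ≠ 0 := Nat.cast_ne_zero.mpr (w k).den_nz
    rw [hq_cast k]
    rw [show ((w k).den : ℝ) * a + W k * ((w k).den : ℝ) * c
        = ((w k).den : ℝ) * (a + W k * c) by ring,
      show ((w k).den : ℝ) * b + W k * ((w k).den : ℝ) * d
        = ((w k).den : ℝ) * (b + W k * d) by ring,
      mul_div_mul_left _ _ hden']
  have key : ∀ s u' : ℝ, 0 < s → s < u' →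
      (a + s * c) / (b + s * d) < (a + u' * c) / (b + u' * d) := by
    intro s u' hs hsu
    have hds : 0 < b + s * d := by positivity
    have hdu : 0 < b + u' * d := by nlinarith
    rw [div_lt_div_iff₀ hds hdu]
    nlinarith [mul_pos (sub_pos.mpr hsu) (sub_pos.mpr hbc)]
  constructor
  · intro i j hij
    simp only [hexpr]
    exact key _ _ (hWpos i) (hWmono hij)
  · have hbd : (0:ℝ) < b + t * d := by positivity
    have hlim : Filter.Tendsto (fun k => (a + W k * c) / (b + W k * d))
        Filter.atTop (nhds ((a + t * c) / (b + t * d))) := by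
      exact Filter.Tendsto.div
        (tendsto_const_nhds.add (hWtend.mul tendsto_const_nhds))
        (tendsto_const_nhds.add (hWtend.mul tendsto_const_nhds)) hbd.ne'
    have heq : (a + t * c) / (b + t * d) = α := by
      rw [ht_def]
      field_simp
      ring
    rw [← heq]
    exact hlim.congr fun k => (hexpr k).symm
end

section
/- The limit as n → ∞ of (Σ_{k=1}^n log(4k² + 4k + 7)) / (Σ_{k=1}^n log(4k + 7)) equals 2. -/
open Filter Finset Asymptotics Real Topology

/-!
Termwise, `log (4k² + 4k + 7) = 2 log (4k + 7) + O(1)`, because the quotient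
`(4k² + 4k + 7) / (4k + 7)²` stays in `[1/9, 1]`. Since `log (4k + 7) → ∞`, the bounded errors
are `o(log (4k + 7))`, and as the denominator diverges they remain negligible after summation
(a Stolz–Cesàro argument), so the ratio of partial sums tends to `2`.
-/

theorem sum_Icc_one_eq_sum_range {M : Type*} [AddCommMonoid M] (f : ℕ → M) (n : ℕ) :
    ∑ k ∈ Icc 1 n, f k = ∑ i ∈ range n, f (i + 1) := by
  rw [range_eq_Ico, sum_Ico_add' f 0 n 1, zero_add, Finset.Ico_add_one_right_eq_Icc]

theorem tendsto_sum_range_div_sum_range {f g : ℕ → ℝ} {c : ℝ}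
    (h : (fun i ↦ f i - c * g i) =o[atTop] g) (hg : 0 ≤ g)
    (hsum : Tendsto (fun n ↦ ∑ i ∈ range n, g i) atTop atTop) :
    Tendsto (fun n ↦ (∑ i ∈ range n, f i) / ∑ i ∈ range n, g i) atTop (𝓝 c) := by
  rw [← tendsto_sub_nhds_zero_iff]
  refine (h.sum_range hg hsum).tendsto_div_nhds_zero.congr' ?_
  filter_upwards [hsum.eventually_gt_atTop 0] with n hn
  rw [sum_sub_distrib, ← mul_sum, sub_div, mul_div_cancel_right₀ _ hn.ne']

theorem abs_log_quadratic_sub_two_mul_log_linear_le {x : ℝ} (hx : 0 ≤ x) :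
    |log (4 * x ^ 2 + 4 * x + 7) - 2 * log (4 * x + 7)| ≤ log 9 := by
  have hA : 0 < 4 * x ^ 2 + 4 * x + 7 := by positivity
  have hsq : 2 * log (4 * x + 7) = log ((4 * x + 7) ^ 2) := by rw [log_pow]; norm_num
  rw [hsq, abs_le]
  constructor
  · rw [neg_le_sub_iff_le_add, ← log_mul hA.ne' (by norm_num)]
    exact log_le_log (by positivity) (by nlinarith [sq_nonneg (2 * x - 1)])
  · have : log (4 * x ^ 2 + 4 * x + 7) ≤ log ((4 * x + 7) ^ 2) := log_le_log hA (by nlinarith)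
    linarith [log_nonneg (by norm_num : (1 : ℝ) ≤ 9)]

theorem tendsto_log_linear_atTop :
    Tendsto (fun k : ℕ ↦ log (4 * (k : ℝ) + 7)) atTop atTop :=
  tendsto_log_atTop.comp <| tendsto_atTop_add_const_right _ _ <|
    tendsto_natCast_atTop_atTop.const_mul_atTop (by norm_num)

theorem log_quadratic_sub_two_mul_log_linear_isLittleO :
    (fun k : ℕ ↦ log (4 * (k : ℝ) ^ 2 + 4 * k + 7) - 2 * log (4 * (k : ℝ) + 7))
      =o[atTop] fun k : ℕ ↦ log (4 * (k : ℝ) + 7) := by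
  have hbounded : (fun k : ℕ ↦ log (4 * (k : ℝ) ^ 2 + 4 * k + 7) - 2 * log (4 * (k : ℝ) + 7))
      =O[atTop] fun _ ↦ (1 : ℝ) :=
    isBigO_iff.2 ⟨log 9, .of_forall fun k ↦ by
      simpa using abs_log_quadratic_sub_two_mul_log_linear_le (Nat.cast_nonneg k)⟩
  exact hbounded.trans_isLittleO <| (isLittleO_one_left_iff ℝ).2 <|
    tendsto_norm_atTop_atTop.comp tendsto_log_linear_atTop

theorem stmt_16 :
    Filter.Tendsto
      (fun n : ℕ =>
        (∑ k ∈ Finset.Icc 1 n, Real.log (4 * (k : ℝ) ^ 2 + 4 * k + 7)) /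
        (∑ k ∈ Finset.Icc 1 n, Real.log (4 * (k : ℝ) + 7)))
      Filter.atTop (nhds 2) := by
  have hshift := tendsto_add_atTop_nat 1
  have hnonneg : ∀ k : ℕ, 0 ≤ log (4 * ((k + 1 : ℕ) : ℝ) + 7) := fun k ↦
    log_nonneg (by push_cast; linarith [(k.cast_nonneg : (0 : ℝ) ≤ k)])
  have hsum : Tendsto (fun n ↦ ∑ i ∈ range n, log (4 * ((i + 1 : ℕ) : ℝ) + 7)) atTop atTop :=
    (not_summable_iff_tendsto_nat_atTop_of_nonneg hnonneg).1 fun hs ↦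
      not_tendsto_atTop_of_tendsto_nhds hs.tendsto_atTop_zero
        (tendsto_log_linear_atTop.comp hshift)
  simp only [sum_Icc_one_eq_sum_range]
  exact tendsto_sum_range_div_sum_range
    (log_quadratic_sub_two_mul_log_linear_isLittleO.comp_tendsto hshift) hnonneg hsum
end
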